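/- arXiv:1508.01373 — 2 statements merged into one kernel-verified Lean document; each statement's English description precedes it below -/
import Mathlib

section
/- If u is a convergent of the even-integer continued fraction expansion of an irrational x, and w = c/d is any ∞-rational with d ≤ b (where u = a/b in reduced form) and w ≠ u, then |bx − a| < |dx − c|. Conversely, every ∞-rational u with this strong approximation property is a convergent of the EICF expansion of x. -/
open Filter Topology OnePoint

/-- Inverse on ℚ ∪ {∞} (`Option.none` = ∞): 1/∞ = 0 and 1/0 = ∞. -/
def cfInv : Option ℚ → Option ℚ
  | Option.none => Option.some 0
  | Option.some q => if q = 0 then Option.none else Option.some q⁻¹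

/-- Value of the finite continued fraction [b₁,…,bₙ] in ℚ ∪ {∞},
with `cfVal [] = Option.none` (that is, ∞). -/
def cfVal : List ℤ → Option ℚ
  | [] => Option.none
  | b :: t => (cfInv (cfVal t)).map (fun q => (b : ℚ) + q)

/-- Embed ℚ ∪ {∞} into the extended real line ℝ ∪ {∞}. -/
def toOP : Option ℚ → OnePoint ℝ
  | Option.none => ∞
  | Option.some q => ((q : ℝ) : OnePoint ℝ)

/-- The n-th convergent (value of the first n+1 terms) of the continued fraction
with coefficients `b 0, b 1, …`. -/
def cfConv (b : ℕ → ℤ) (n : ℕ) : Option ℚ := cfVal ((List.range (n + 1)).map b)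

/-- `b 0, b 1, …` is an even-integer continued fraction. -/
def IsEICF (b : ℕ → ℤ) : Prop := (∀ i, Even (b i)) ∧ ∀ i ≥ 1, b i ≠ 0

/-- The even-integer continued fraction `b` is an expansion of `x`:
its convergents tend to `x` in the extended real line. -/
def IsEICFExpansion (b : ℕ → ℤ) (x : OnePoint ℝ) : Prop :=
  IsEICF b ∧ Tendsto (fun n => toOP (cfConv b n)) atTop (𝓝 x)


namespace EICFAux

/-- numerator continuants, offset: `cfP e (n+2)` is the numerator of the n-th convergent. -/
def cfP (e : ℕ → ℤ) : ℕ → ℤ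
  | 0 => 0
  | 1 => 1
  | n+2 => e n * cfP e (n+1) + cfP e n

/-- denominator continuants. -/
def cfQ (e : ℕ → ℤ) : ℕ → ℤ
  | 0 => 1
  | 1 => 0
  | n+2 => e n * cfQ e (n+1) + cfQ e n

/-- tail values: `cfT e j k` is the value of `[e j, …, e (j+k)]`. -/
def cfT (e : ℕ → ℤ) : ℕ → ℕ → ℚ
  | j, 0 => (e j : ℚ)
  | j, k+1 => (e j : ℚ) + (cfT e (j+1) k)⁻¹

/-- the list [e j, …, e (j+k)] -/
def lst (e : ℕ → ℤ) (j k : ℕ) : List ℤ := (List.range (k+1)).map (fun i => e (j + i))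

lemma lst_succ (e : ℕ → ℤ) (j k : ℕ) : lst e j (k+1) = e j :: lst e (j+1) k := by
  unfold lst
  rw [List.range_succ_eq_map, List.map_cons, List.map_map]
  simp only [Nat.add_zero]
  congr 1
  apply List.map_congr_left
  intro a _
  simp only [Function.comp_apply]
  congr 1
  omega

lemma det (e : ℕ → ℤ) (k : ℕ) :
    cfP e (k+1) * cfQ e k - cfP e k * cfQ e (k+1) = (-1)^k := by
  induction k with
  | zero => simp [cfP, cfQ]
  | succ k ih =>
    show cfP e (k+2) * cfQ e (k+1) - cfP e (k+1) * cfQ e (k+2) = _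
    rw [show cfP e (k+2) = e k * cfP e (k+1) + cfP e k from rfl,
        show cfQ e (k+2) = e k * cfQ e (k+1) + cfQ e k from rfl, pow_succ]
    linear_combination (-1 : ℤ) * ih

lemma parity (e : ℕ → ℤ) (he : ∀ i, Even (e i)) (k : ℕ) :
    Odd (cfP e k + cfQ e k) ∧ Odd (cfP e (k+1) + cfQ e (k+1)) := by
  induction k with
  | zero => exact ⟨⟨0, by simp [cfP, cfQ]⟩, ⟨0, by simp [cfP, cfQ]⟩⟩
  | succ k ih =>
    refine ⟨ih.2, ?_⟩
    show Odd (cfP e (k+2) + cfQ e (k+2))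
    rw [show cfP e (k+2) = e k * cfP e (k+1) + cfP e k from rfl,
        show cfQ e (k+2) = e k * cfQ e (k+1) + cfQ e k from rfl]
    obtain ⟨m, hm⟩ := he k
    obtain ⟨a, ha⟩ := ih.1
    exact ⟨m * (cfP e (k+1) + cfQ e (k+1)) + a, by rw [hm] at *; linarith⟩

lemma cfT_prop (e : ℕ → ℤ) (h2 : ∀ i, 1 ≤ i → 2 ≤ |e i|) :
    ∀ k j, cfVal (lst e j k) = Option.some (cfT e j k) ∧
      |cfT e j k - (e j : ℚ)| ≤ 1 ∧ (1 ≤ j → 1 < |cfT e j k|) := by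
  intro k
  induction k with
  | zero =>
    intro j
    have hl : lst e j 0 = [e j] := rfl
    refine ⟨?_, by simp [cfT], fun hj => ?_⟩
    · rw [hl]; simp [cfVal, cfInv, cfT]
    · have h := h2 j hj
      show (1:ℚ) < |((e j : ℚ))|
      rw [← Int.cast_abs]
      exact_mod_cast (by omega : (1:ℤ) < |e j|)
  | succ k ih =>
    intro j
    obtain ⟨hv, hnear, hbig⟩ := ih (j+1)
    have hb : 1 < |cfT e (j+1) k| := hbig (by omega)
    have hne : cfT e (j+1) k ≠ 0 := by
      intro h; rw [h] at hb; norm_num at hb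
    have hinv : |(cfT e (j+1) k)⁻¹| < 1 := by
      rw [abs_inv]
      exact inv_lt_one_of_one_lt₀ hb
    refine ⟨?_, ?_, fun _ => ?_⟩
    · rw [lst_succ, cfVal, hv]
      simp [cfInv, hne, cfT]
    · show |(e j : ℚ) + (cfT e (j+1) k)⁻¹ - (e j : ℚ)| ≤ 1
      simpa using le_of_lt hinv
    · show (1:ℚ) < |(e j : ℚ) + (cfT e (j+1) k)⁻¹|
      have h := h2 j (by omega)
      have h' : (2:ℚ) ≤ |(e j : ℚ)| := by
        have : ((2:ℤ) : ℚ) ≤ ((|e j| : ℤ) : ℚ) := by exact_mod_cast h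
        simpa [Int.cast_abs] using this
      have habs := abs_add_le ((e j : ℚ) + (cfT e (j+1) k)⁻¹) (-(cfT e (j+1) k)⁻¹)
      simp only [add_neg_cancel_right, abs_neg] at habs
      linarith

lemma qlt (e : ℕ → ℤ) (h2 : ∀ i, 1 ≤ i → 2 ≤ |e i|) :
    ∀ k, |cfQ e (k+1)| < |cfQ e (k+2)| := by
  intro k
  induction k with
  | zero => show |cfQ e 1| < |cfQ e 2|; norm_num [cfQ]
  | succ k ih =>
    have h := h2 (k+1) (by omega)
    have hrec : cfQ e (k+3) = e (k+1) * cfQ e (k+2) + cfQ e (k+1) := rfl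
    have habs := abs_add_le (e (k+1) * cfQ e (k+2) + cfQ e (k+1)) (-(cfQ e (k+1)))
    simp only [add_neg_cancel_right, abs_neg] at habs
    have hmul : |e (k+1) * cfQ e (k+2)| = |e (k+1)| * |cfQ e (k+2)| := abs_mul _ _
    show |cfQ e (k+2)| < |cfQ e (k+3)|
    rw [hrec]
    nlinarith [abs_nonneg (cfQ e (k+2)), abs_nonneg (cfQ e (k+1))]

lemma qge (e : ℕ → ℤ) (h2 : ∀ i, 1 ≤ i → 2 ≤ |e i|) :
    ∀ k : ℕ, (k : ℤ) + 1 ≤ |cfQ e (k+2)| := by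
  intro k
  induction k with
  | zero =>
    have h1 : cfQ e 2 = 1 := by
      show e 0 * cfQ e 1 + cfQ e 0 = 1
      rw [show cfQ e 1 = 0 from rfl, show cfQ e 0 = 1 from rfl]; ring
    rw [h1]; norm_num
  | succ k ih =>
    have h := qlt e h2 (k+1)
    rw [show k+1+1 = k+2 from rfl] at h
    push_cast
    omega

lemma identity (e : ℕ → ℤ) (h2 : ∀ i, 1 ≤ i → 2 ≤ |e i|) (n : ℕ) :
    ∀ j, j ≤ n →
      cfT e 0 n * ((cfQ e (j+1) : ℚ) * cfT e j (n-j) + (cfQ e j : ℚ))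
        = (cfP e (j+1) : ℚ) * cfT e j (n-j) + (cfP e j : ℚ) := by
  intro j
  induction j with
  | zero =>
    intro _
    rw [show cfQ e 1 = 0 from rfl, show cfQ e 0 = 1 from rfl,
        show cfP e 1 = 1 from rfl, show cfP e 0 = 0 from rfl, Nat.sub_zero]
    push_cast
    ring
  | succ j ih =>
    intro hj
    have hih := ih (by omega)
    have hk : n - j = (n - (j+1)) + 1 := by omega
    rw [hk] at hih
    set m := n - (j+1) with hm
    set t := cfT e (j+1) m with htdef
    have ht' : 1 < |t| := (cfT_prop e h2 m (j+1)).2.2 (by omega)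
    have hne : t ≠ 0 := by intro h; rw [h] at ht'; norm_num at ht'
    rw [show cfT e j (m+1) = (e j : ℚ) + t⁻¹ from rfl] at hih
    have hQ : (cfQ e (j+2) : ℚ) = (e j : ℚ) * cfQ e (j+1) + cfQ e j := by
      rw [show cfQ e (j+2) = e j * cfQ e (j+1) + cfQ e j from rfl]; push_cast; ring
    have hP : (cfP e (j+2) : ℚ) = (e j : ℚ) * cfP e (j+1) + cfP e j := by
      rw [show cfP e (j+2) = e j * cfP e (j+1) + cfP e j from rfl]; push_cast; ring
    have key : cfT e 0 n * ((cfQ e (j+1) : ℚ) * ((e j : ℚ) + t⁻¹) + (cfQ e j : ℚ)) * t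
        = ((cfP e (j+1) : ℚ) * ((e j : ℚ) + t⁻¹) + (cfP e j : ℚ)) * t := by rw [hih]
    have hinv : t⁻¹ * t = 1 := inv_mul_cancel₀ hne
    show cfT e 0 n * ((cfQ e (j+1+1) : ℚ) * t + (cfQ e (j+1) : ℚ))
        = (cfP e (j+1+1) : ℚ) * t + (cfP e (j+1) : ℚ)
    rw [show j+1+1 = j+2 from rfl, hQ, hP]
    linear_combination key + ((cfP e (j+1) : ℚ) - cfT e 0 n * (cfQ e (j+1) : ℚ)) * hinv

lemma conv_eq (e : ℕ → ℤ) (h2 : ∀ i, 1 ≤ i → 2 ≤ |e i|) (n : ℕ) :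
    cfT e 0 n * (cfQ e (n+2) : ℚ) = (cfP e (n+2) : ℚ) := by
  have h := identity e h2 n n le_rfl
  rw [Nat.sub_self] at h
  rw [show cfT e n 0 = (e n : ℚ) from rfl] at h
  have hQ : (cfQ e (n+2) : ℚ) = (e n : ℚ) * cfQ e (n+1) + cfQ e n := by
    rw [show cfQ e (n+2) = e n * cfQ e (n+1) + cfQ e n from rfl]; push_cast; ring
  have hP : (cfP e (n+2) : ℚ) = (e n : ℚ) * cfP e (n+1) + cfP e n := by
    rw [show cfP e (n+2) = e n * cfP e (n+1) + cfP e n from rfl]; push_cast; ring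
  rw [hQ, hP]
  linear_combination h

/-- `Th e x k = q_{k-2} x - p_{k-2}` -/
noncomputable def Th (e : ℕ → ℤ) (x : ℝ) (k : ℕ) : ℝ := (cfQ e k : ℝ) * x - (cfP e k : ℝ)

lemma Th_rec (e : ℕ → ℤ) (x : ℝ) (k : ℕ) :
    Th e x (k+2) = (e k : ℝ) * Th e x (k+1) + Th e x k := by
  unfold Th
  rw [show cfQ e (k+2) = e k * cfQ e (k+1) + cfQ e k from rfl,
      show cfP e (k+2) = e k * cfP e (k+1) + cfP e k from rfl]
  push_cast
  ring

lemma lin_ne (x : ℝ) (hx : Irrational x) (a b : ℤ) (ha : a ≠ 0) : (a:ℝ) * x - b ≠ 0 := by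
  intro h
  apply hx
  refine ⟨(b : ℚ) / (a : ℚ), ?_⟩
  have ha' : (a : ℝ) ≠ 0 := Int.cast_ne_zero.2 ha
  push_cast
  field_simp
  linarith

lemma qne (e : ℕ → ℤ) (h2 : ∀ i, 1 ≤ i → 2 ≤ |e i|) (k : ℕ) : cfQ e (k+2) ≠ 0 := by
  have := qge e h2 k
  intro h
  rw [h] at this
  simp at this
  omega

lemma th_ne (e : ℕ → ℤ) (x : ℝ) (hx : Irrational x) (h2 : ∀ i, 1 ≤ i → 2 ≤ |e i|) :
    ∀ k, Th e x k ≠ 0 := by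
  intro k
  match k with
  | 0 =>
    show (cfQ e 0 : ℝ) * x - (cfP e 0 : ℝ) ≠ 0
    rw [show cfQ e 0 = 1 from rfl, show cfP e 0 = 0 from rfl]
    exact lin_ne x hx 1 0 one_ne_zero
  | 1 =>
    show (cfQ e 1 : ℝ) * x - (cfP e 1 : ℝ) ≠ 0
    rw [show cfQ e 1 = 0 from rfl, show cfP e 1 = 1 from rfl]
    norm_num
  | (k+2) => exact lin_ne x hx _ _ (qne e h2 k)

lemma theta_dec (e : ℕ → ℤ) (x : ℝ) (hx : Irrational x) (h2 : ∀ i, 1 ≤ i → 2 ≤ |e i|)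
    (hr : Tendsto (fun n => ((cfT e 0 n : ℝ))) atTop (𝓝 x)) (j : ℕ) :
    |Th e x (j+3)| < |Th e x (j+2)| := by
  -- tail values converge to y = -Th(j+1)/Th(j+2)
  set q1 : ℝ := (cfQ e (j+1) : ℝ)
  set q2 : ℝ := (cfQ e (j+2) : ℝ)
  set p1 : ℝ := (cfP e (j+1) : ℝ)
  set p2 : ℝ := (cfP e (j+2) : ℝ)
  have hth2 : Th e x (j+2) ≠ 0 := th_ne e x hx h2 (j+2)
  set R : ℕ → ℝ := fun m => ((cfT e 0 (m + (j+1)) : ℝ)) with hRdef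
  have hR : Tendsto R atTop (𝓝 x) := (tendsto_add_atTop_iff_nat (j+1)).mpr hr
  set s : ℕ → ℝ := fun m => ((cfT e (j+1) m : ℝ)) with hsdef
  have idr : ∀ m, s m * (q2 * R m - p2) = p1 - q1 * R m := by
    intro m
    have hq := identity e h2 (m + (j+1)) (j+1) (by omega)
    rw [show m + (j+1) - (j+1) = m from by omega] at hq
    have hq' := congrArg (fun z : ℚ => (z : ℝ)) hq
    push_cast at hq'
    show ((cfT e (j+1) m : ℝ)) * ((cfQ e (j+2) : ℝ) * R m - (cfP e (j+2) : ℝ))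
        = (cfP e (j+1) : ℝ) - (cfQ e (j+1) : ℝ) * R m
    rw [show (j+1+1) = j+2 from rfl] at hq'
    have : R m = ((cfT e 0 (m + (j+1)) : ℝ)) := rfl
    rw [this]
    linear_combination hq'
  have hD : Tendsto (fun m => q2 * R m - p2) atTop (𝓝 (Th e x (j+2))) := by
    have : Th e x (j+2) = q2 * x - p2 := rfl
    rw [this]
    exact ((tendsto_const_nhds.mul hR).sub tendsto_const_nhds)
  have hN : Tendsto (fun m => p1 - q1 * R m) atTop (𝓝 (-(Th e x (j+1)))) := by
    have : -(Th e x (j+1)) = p1 - q1 * x := by show _ = _ - _; unfold Th; ring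
    rw [this]
    exact (tendsto_const_nhds.sub (tendsto_const_nhds.mul hR))
  have hDne : ∀ᶠ m in atTop, q2 * R m - p2 ≠ 0 := hD.eventually_ne hth2
  set y : ℝ := -(Th e x (j+1)) / Th e x (j+2) with hydef
  have hs : Tendsto s atTop (𝓝 y) := by
    have hdiv : Tendsto (fun m => (p1 - q1 * R m) / (q2 * R m - p2)) atTop (𝓝 y) :=
      hN.div hD hth2
    apply hdiv.congr'
    filter_upwards [hDne] with m hm
    rw [div_eq_iff hm]
    linear_combination -(idr m)
  have hsb : ∀ m, |s m - (e (j+1) : ℝ)| ≤ 1 := by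
    intro m
    have := (cfT_prop e h2 m (j+1)).2.1
    have h' : |((cfT e (j+1) m - (e (j+1) : ℚ) : ℚ) : ℝ)| ≤ 1 := by
      rw [← Rat.cast_abs]
      exact_mod_cast this
    push_cast at h'
    exact h'
  have hyb : |y - (e (j+1) : ℝ)| ≤ 1 := by
    have : Tendsto (fun m => |s m - (e (j+1) : ℝ)|) atTop (𝓝 (|y - (e (j+1) : ℝ)|)) :=
      ((hs.sub tendsto_const_nhds).abs)
    exact le_of_tendsto this (Filter.Eventually.of_forall hsb)
  -- now Th(j+3) = (e(j+1) - y) * Th(j+2)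
  have hkey : Th e x (j+3) = ((e (j+1) : ℝ) - y) * Th e x (j+2) := by
    have h3 := Th_rec e x (j+1)
    rw [show j+1+2 = j+3 from rfl, show j+1+1 = j+2 from rfl] at h3
    rw [h3, hydef]
    field_simp
    ring
  have hle : |Th e x (j+3)| ≤ |Th e x (j+2)| := by
    rw [hkey, abs_mul]
    have : |(e (j+1) : ℝ) - y| ≤ 1 := by
      rw [abs_sub_comm]; exact hyb
    nlinarith [abs_nonneg (Th e x (j+2))]
  rcases lt_or_eq_of_le hle with h | h
  · exact h
  -- equality is impossible: it would make x rational
  exfalso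
  rcases abs_eq_abs.1 h with h' | h'
  · have : ((cfQ e (j+3) - cfQ e (j+2) : ℤ) : ℝ) * x - ((cfP e (j+3) - cfP e (j+2) : ℤ) : ℝ) = 0 := by
      unfold Th at h'
      push_cast
      linarith [h']
    have hcoef : cfQ e (j+3) - cfQ e (j+2) ≠ 0 := by
      have := qlt e h2 (j+1)
      rw [show j+1+1 = j+2 from rfl, show j+1+2 = j+3 from rfl] at this
      intro hc
      rw [show cfQ e (j+3) = cfQ e (j+2) from by omega] at this
      omega
    exact lin_ne x hx _ _ hcoef this
  · have : ((cfQ e (j+3) + cfQ e (j+2) : ℤ) : ℝ) * x - ((cfP e (j+3) + cfP e (j+2) : ℤ) : ℝ) = 0 := by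
      unfold Th at h'
      push_cast
      linarith [h']
    have hcoef : cfQ e (j+3) + cfQ e (j+2) ≠ 0 := by
      have := qlt e h2 (j+1)
      rw [show j+1+1 = j+2 from rfl, show j+1+2 = j+3 from rfl] at this
      intro hc
      rw [show cfQ e (j+3) = -cfQ e (j+2) from by omega] at this
      rw [abs_neg] at this
      omega
    exact lin_ne x hx _ _ hcoef this

lemma abs_ge_two {a : ℤ} (h0 : a ≠ 0) (h1 : a ≠ 1) (h2 : a ≠ -1) : 2 ≤ |a| := by
  rcases lt_trichotomy a 0 with h|h|h
  · rw [abs_of_neg h]; omega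
  · exact absurd h h0
  · rw [abs_of_pos h]; omega

lemma core (e : ℕ → ℤ) (x : ℝ) (hx : Irrational x) (h2 : ∀ i, 1 ≤ i → 2 ≤ |e i|)
    (hev : ∀ i, Even (e i))
    (hr : Tendsto (fun n => ((cfT e 0 n : ℝ))) atTop (𝓝 x)) (n : ℕ) (c d : ℤ)
    (hd : 0 < d) (hodd : Odd (c + d)) (hlt : d < |cfQ e (n+3)|)
    (hne1 : ¬(c = cfP e (n+2) ∧ d = cfQ e (n+2)))
    (hne2 : ¬(c = -cfP e (n+2) ∧ d = -cfQ e (n+2))) :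
    |Th e x (n+2)| < |(d : ℝ) * x - (c : ℝ)| := by
  obtain ⟨k1, hk1⟩ := (parity e hev (n+2)).1
  obtain ⟨k2, hk2⟩ := (parity e hev (n+2)).2
  obtain ⟨k3, hk3⟩ := hodd
  have hth2 : Th e x (n+2) ≠ 0 := th_ne e x hx h2 (n+2)
  have hth3lt : |Th e x (n+3)| < |Th e x (n+2)| := theta_dec e x hx h2 hr n
  have hqlt0 : |cfQ e (n+2)| < |cfQ e (n+3)| := by
    have := qlt e h2 (n+1)
    rw [show n+1+1 = n+2 from rfl, show n+1+2 = n+3 from rfl] at this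
    exact this
  have hThQ : Th e x (n+2) = (cfQ e (n+2) : ℝ) * x - (cfP e (n+2) : ℝ) := rfl
  have hThQ' : Th e x (n+3) = (cfQ e (n+3) : ℝ) * x - (cfP e (n+3) : ℝ) := rfl
  set p : ℤ := cfP e (n+2) with hp
  set q : ℤ := cfQ e (n+2) with hq
  set p' : ℤ := cfP e (n+3) with hp'
  set q' : ℤ := cfQ e (n+3) with hq'
  have hdet : p' * q - p * q' = (-1)^(n+2) := det e (n+2)
  obtain ⟨σ, hσdef⟩ : ∃ σ : ℤ, σ = (-1)^(n+2) := ⟨_, rfl⟩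
  rw [← hσdef] at hdet
  have hσ : σ * σ = 1 := by
    rw [hσdef, ← pow_add]
    exact Even.neg_one_pow ⟨n+2, by ring⟩
  clear_value p q p' q'
  obtain ⟨α, hα⟩ : ∃ α : ℤ, α = σ * (c * q - d * p) := ⟨_, rfl⟩
  obtain ⟨β, hβ⟩ : ∃ β : ℤ, β = σ * (d * p' - c * q') := ⟨_, rfl⟩
  have hdq : d = α * q' + β * q := by
    rw [hα, hβ]
    linear_combination (-σ*d)*hdet - d*hσ
  have hcp : c = α * p' + β * p := by
    rw [hα, hβ]
    linear_combination (-σ*c)*hdet - c*hσ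
  have hαβ : α + β = 2*(k3 - α*k2 - β*k1) + 1 := by
    linear_combination hk3 - hcp - hdq - α*hk2 - β*hk1
  clear hα hβ hσ hσdef hdet
  have hβne : β ≠ 0 := by
    intro h0
    have hd0 : d = α * q' := by rw [hdq, h0]; ring
    have hαne : α ≠ 0 := by
      intro h
      rw [h, zero_mul] at hd0
      omega
    have h1 : 1 ≤ |α| := by
      rcases lt_trichotomy α 0 with h|h|h
      · rw [abs_of_neg h]; omega
      · exact absurd h hαne
      · rw [abs_of_pos h]; omega
    have hge : |q'| ≤ |d| := by
      calc |q'| = 1 * |q'| := (one_mul _).symm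
        _ ≤ |α| * |q'| := mul_le_mul_of_nonneg_right h1 (abs_nonneg _)
        _ = |d| := by rw [← abs_mul, ← hd0]
    rw [abs_of_pos hd] at hge
    omega
  by_cases hα0 : α = 0
  · -- c = β p, d = β q
    have hd0 : d = β * q := by rw [hdq, hα0]; ring
    have hc0 : c = β * p := by rw [hcp, hα0]; ring
    have hβ1 : β ≠ 1 := by
      intro h; rw [h, one_mul] at hd0 hc0; exact hne1 ⟨hc0, hd0⟩
    have hβm1 : β ≠ -1 := by
      intro h; rw [h] at hd0 hc0; apply hne2; omega
    have hβ2 : 2 ≤ |β| := abs_ge_two hβne hβ1 hβm1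
    have hreal : (d : ℝ) * x - (c : ℝ) = (β : ℝ) * Th e x (n+2) := by
      rw [hd0, hc0, hThQ]
      push_cast
      ring
    rw [hreal, abs_mul]
    have hb : (2:ℝ) ≤ |(β : ℝ)| := by
      rw [← Int.cast_abs]
      exact_mod_cast hβ2
    have hpos : 0 < |Th e x (n+2)| := abs_pos.2 hth2
    nlinarith
  · -- α ≠ 0
    have hα1 : 1 ≤ |α| := by
      rcases lt_trichotomy α 0 with h|h|h
      · rw [abs_of_neg h]; omega
      · exact absurd h hα0
      · rw [abs_of_pos h]; omega
    have hαle : |α| + 1 ≤ |β| := by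
      have e1 : α * q' = d + -(β * q) := by rw [hdq]; ring
      have h1 : |α * q'| ≤ |d| + |β * q| := by
        rw [e1]
        exact (abs_add_le _ _).trans (by rw [abs_neg])
      rw [abs_mul, abs_mul, abs_of_pos hd] at h1
      have hd' : d ≤ |q'| - 1 := by omega
      have hq1 : |q| ≤ |q'| - 1 := by omega
      have hane : α ≠ β := by intro h; omega
      have hane' : α ≠ -β := by intro h; omega
      have h3 : |α| ≤ |β| := by
        by_contra hcon
        push_neg at hcon
        have hba : |β| + 1 ≤ |α| := by omega
        have hq'pos : 1 ≤ |q'| := by omega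
        nlinarith [abs_nonneg α, abs_nonneg β, abs_nonneg q, abs_nonneg q']
      have : |α| ≠ |β| := by
        rw [Ne, abs_eq_abs]
        push_neg
        exact ⟨hane, hane'⟩
      omega
    have hreal : (d : ℝ) * x - (c : ℝ) = (α : ℝ) * Th e x (n+3) + (β : ℝ) * Th e x (n+2) := by
      rw [hdq, hcp, hThQ, hThQ']
      push_cast
      ring
    rw [hreal]
    have habs : |(β : ℝ) * Th e x (n+2)| - |(α : ℝ) * Th e x (n+3)|
        ≤ |(α : ℝ) * Th e x (n+3) + (β : ℝ) * Th e x (n+2)| := by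
      have h := abs_add_le ((α : ℝ) * Th e x (n+3) + (β : ℝ) * Th e x (n+2)) (-((α : ℝ) * Th e x (n+3)))
      simp only [add_neg_cancel_comm, abs_neg] at h
      linarith
    rw [abs_mul, abs_mul] at habs
    have hαr : (1:ℝ) ≤ |(α : ℝ)| := by
      rw [← Int.cast_abs]
      exact_mod_cast hα1
    have hβr : |(α : ℝ)| + 1 ≤ |(β : ℝ)| := by
      rw [← Int.cast_abs, ← Int.cast_abs]
      exact_mod_cast hαle
    nlinarith [abs_nonneg (Th e x (n+3))]

lemma coprime_pq (e : ℕ → ℤ) (n : ℕ) :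
    Nat.Coprime (cfP e (n+2)).natAbs (cfQ e (n+2)).natAbs := by
  have hdet := det e (n+2)
  have hσ : ((-1:ℤ))^(n+2) * ((-1:ℤ))^(n+2) = 1 := by
    rw [← pow_add]; exact Even.neg_one_pow ⟨n+2, by ring⟩
  have hco : IsCoprime (cfP e (n+2)) (cfQ e (n+2)) := by
    refine ⟨-cfQ e (n+2+1) * (-1:ℤ)^(n+2), cfP e (n+2+1) * (-1:ℤ)^(n+2), ?_⟩
    linear_combination ((-1:ℤ)^(n+2)) * hdet + hσ
  have := Int.isCoprime_iff_gcd_eq_one.1 hco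
  exact this

lemma conv_num_den (e : ℕ → ℤ) (h2 : ∀ i, 1 ≤ i → 2 ≤ |e i|) (n : ℕ) :
    ((cfT e 0 n).num = cfP e (n+2) ∧ ((cfT e 0 n).den : ℤ) = cfQ e (n+2)) ∨
    ((cfT e 0 n).num = -cfP e (n+2) ∧ ((cfT e 0 n).den : ℤ) = -cfQ e (n+2)) := by
  have hqne : cfQ e (n+2) ≠ 0 := qne e h2 n
  have hco := coprime_pq e n
  have hr := conv_eq e h2 n
  rcases lt_trichotomy (cfQ e (n+2)) 0 with hq | hq | hq
  · right
    have hrdiv : cfT e 0 n = ((-cfP e (n+2) : ℤ) : ℚ) / ((-cfQ e (n+2) : ℤ) : ℚ) := by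
      rw [eq_div_iff (by exact_mod_cast (by omega : (-cfQ e (n+2) : ℤ) ≠ 0))]
      push_cast
      linear_combination -hr
    have hpos : (0:ℤ) < -cfQ e (n+2) := by omega
    have hco' : Nat.Coprime (-cfP e (n+2)).natAbs (-cfQ e (n+2)).natAbs := by
      rwa [Int.natAbs_neg, Int.natAbs_neg]
    constructor
    · rw [hrdiv]; exact Rat.num_div_eq_of_coprime hpos hco'
    · rw [hrdiv]; exact Rat.den_div_eq_of_coprime hpos hco'
  · exact absurd hq hqne
  · left
    have hrdiv : cfT e 0 n = ((cfP e (n+2) : ℤ) : ℚ) / ((cfQ e (n+2) : ℤ) : ℚ) := by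
      rw [eq_div_iff (by exact_mod_cast hqne)]
      exact_mod_cast hr
    constructor
    · rw [hrdiv]; exact Rat.num_div_eq_of_coprime hq hco
    · rw [hrdiv]; exact Rat.den_div_eq_of_coprime hq hco

lemma cfConv_eq (e : ℕ → ℤ) (h2 : ∀ i, 1 ≤ i → 2 ≤ |e i|) (n : ℕ) :
    cfConv e n = Option.some (cfT e 0 n) := by
  have h := (cfT_prop e h2 n 0).1
  have hl : (List.range (n+1)).map e = lst e 0 n := by
    unfold lst
    apply List.map_congr_left
    intro a _
    rw [Nat.zero_add]
  rw [cfConv, hl]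
  exact h

end EICFAux

open EICFAux in
/-- Lagrange's theorem for even-integer continued fractions: an ∞-rational u is a
convergent of the EICF expansion of an irrational x if and only if it is a strong
∞-approximant of x. -/
theorem eicf_convergent_iff_strong_approximant (x : ℝ) (hx : Irrational x)
    (e : ℕ → ℤ) (he : IsEICFExpansion e ((x : ℝ) : OnePoint ℝ))
    (u : ℚ) (hu : Odd (u.num + (u.den : ℤ))) :
    ((∃ n : ℕ, cfConv e n = Option.some u) →
      ∀ w : ℚ, Odd (w.num + (w.den : ℤ)) → w.den ≤ u.den → w ≠ u →
        |(u.den : ℝ) * x - u.num| < |(w.den : ℝ) * x - w.num|) ∧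
    ((∀ w : ℚ, Odd (w.num + (w.den : ℤ)) → w.den ≤ u.den →
        |(u.den : ℝ) * x - u.num| ≤ |(w.den : ℝ) * x - w.num| ∧
          (|(u.den : ℝ) * x - u.num| = |(w.den : ℝ) * x - w.num| → w = u)) →
      ∃ n : ℕ, cfConv e n = Option.some u) := by
  have hev : ∀ i, Even (e i) := he.1.1
  have h2 : ∀ i, 1 ≤ i → 2 ≤ |e i| := by
    intro i hi
    obtain ⟨m, hm⟩ := hev i
    have hne := he.1.2 i hi
    rcases lt_trichotomy (e i) 0 with h|h|h
    · rw [abs_of_neg h]; omega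
    · exact absurd h hne
    · rw [abs_of_pos h]; omega
  have hr : Tendsto (fun n => ((cfT e 0 n : ℝ))) atTop (𝓝 x) := by
    have h := he.2
    have heq : (fun n => toOP (cfConv e n)) = fun n => (((cfT e 0 n : ℝ) : OnePoint ℝ)) := by
      funext n
      rw [cfConv_eq e h2 n]
      rfl
    rw [heq] at h
    exact (OnePoint.isOpenEmbedding_coe.tendsto_nhds_iff).mpr h
  -- |den * x - num| for convergents equals |Th (n+2)|
  have key : ∀ n : ℕ, |(((cfT e 0 n).den : ℝ)) * x - ((cfT e 0 n).num : ℝ)| = |Th e x (n+2)| := by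
    intro n
    rcases conv_num_den e h2 n with ⟨h1, h1d⟩ | ⟨h1, h1d⟩
    · have hden : (((cfT e 0 n).den : ℤ) : ℝ) = ((cfQ e (n+2) : ℤ) : ℝ) := by exact_mod_cast congrArg (Int.cast : ℤ → ℝ) h1d
      rw [h1]
      push_cast at hden ⊢
      rw [hden]
      rfl
    · have hden : (((cfT e 0 n).den : ℤ) : ℝ) = ((-cfQ e (n+2) : ℤ) : ℝ) := by exact_mod_cast congrArg (Int.cast : ℤ → ℝ) h1d
      rw [h1]
      push_cast at hden ⊢
      rw [hden]
      have : -(cfQ e (n+2) : ℝ) * x - -(cfP e (n+2) : ℝ) = -((cfQ e (n+2) : ℝ) * x - (cfP e (n+2) : ℝ)) := by ring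
      rw [this, abs_neg]
      rfl
  have keypar : ∀ n : ℕ, Odd ((cfT e 0 n).num + ((cfT e 0 n).den : ℤ)) := by
    intro n
    have hpq := (parity e hev (n+2)).1
    rcases conv_num_den e h2 n with ⟨h1, h1d⟩ | ⟨h1, h1d⟩
    · rw [h1, h1d]; exact hpq
    · rw [h1, h1d]
      have : -cfP e (n+2) + -cfQ e (n+2) = -(cfP e (n+2) + cfQ e (n+2)) := by ring
      rw [this]
      exact hpq.neg
  have keyden : ∀ n : ℕ, (cfT e 0 n).den = (cfQ e (n+2)).natAbs := by
    intro n
    rcases conv_num_den e h2 n with ⟨_, h1d⟩ | ⟨_, h1d⟩ <;>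
    · have := congrArg Int.natAbs h1d
      simpa [Int.natAbs_neg] using this
  constructor
  · -- convergent → strong approximant
    rintro ⟨n, hn⟩ w hw1 hw2 hw3
    have hun : u = cfT e 0 n := by
      have h := cfConv_eq e h2 n
      rw [hn] at h
      exact Option.some_injective _ h
    have hq' : (u.den : ℤ) < |cfQ e (n+3)| := by
      have hlt := qlt e h2 (n+1)
      rw [show n+1+1 = n+2 from rfl, show n+1+2 = n+3 from rfl] at hlt
      have hd : u.den = (cfQ e (n+2)).natAbs := by rw [hun]; exact keyden n
      calc (u.den : ℤ) = |cfQ e (n+2)| := by rw [hd, Int.abs_eq_natAbs]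
        _ < |cfQ e (n+3)| := hlt
    have hwd : (0:ℤ) < (w.den : ℤ) := by exact_mod_cast w.den_pos
    have hwle : (w.den : ℤ) ≤ (u.den : ℤ) := by exact_mod_cast hw2
    -- exclusions
    have hne1 : ¬(w.num = cfP e (n+2) ∧ (w.den : ℤ) = cfQ e (n+2)) := by
      rintro ⟨ha, hb⟩
      apply hw3
      rcases conv_num_den e h2 n with ⟨h1, h1d⟩ | ⟨h1, h1d⟩
      · apply Rat.ext
        · rw [hun, h1, ha]
        · have : (w.den : ℤ) = ((cfT e 0 n).den : ℤ) := by rw [hb, h1d]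
          rw [hun]; exact_mod_cast this
      · exfalso
        have hwdenpos : (0:ℤ) < (u.den : ℤ) := by exact_mod_cast u.pos
        rw [hun] at hwdenpos
        rw [h1d] at hwdenpos
        rw [← hb] at hwdenpos
        omega
    have hne2 : ¬(w.num = -cfP e (n+2) ∧ (w.den : ℤ) = -cfQ e (n+2)) := by
      rintro ⟨ha, hb⟩
      apply hw3
      rcases conv_num_den e h2 n with ⟨h1, h1d⟩ | ⟨h1, h1d⟩
      · exfalso
        have hwdenpos : (0:ℤ) < (u.den : ℤ) := by exact_mod_cast u.pos
        rw [hun] at hwdenpos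
        rw [h1d] at hwdenpos
        omega
      · apply Rat.ext
        · rw [hun, h1, ha]
        · have : (w.den : ℤ) = ((cfT e 0 n).den : ℤ) := by rw [hb, h1d]
          rw [hun]; exact_mod_cast this
    have hcore := core e x hx h2 hev hr n w.num (w.den : ℤ) hwd hw1
      (lt_of_le_of_lt hwle hq') hne1 hne2
    have hL : |(u.den : ℝ) * x - u.num| = |Th e x (n+2)| := by
      rw [hun]
      exact key n
    rw [hL]
    exact hcore
  · -- strong approximant → convergent
    intro H
    have hb1 : 1 ≤ u.den := u.pos
    have hQ2 : cfQ e 2 = 1 := by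
      show e 0 * cfQ e 1 + cfQ e 0 = 1
      rw [show cfQ e 1 = 0 from rfl, show cfQ e 0 = 1 from rfl]; ring
    have hP0 : (cfQ e (0+2)).natAbs ≤ u.den := by
      rw [show (0+2) = 2 from rfl, hQ2]
      simpa using hb1
    obtain ⟨n, hPn, hlt⟩ : ∃ n : ℕ, (cfQ e (n+2)).natAbs ≤ u.den ∧ u.den < (cfQ e (n+3)).natAbs := by
      refine ⟨Nat.findGreatest (fun k => (cfQ e (k+2)).natAbs ≤ u.den) u.den, ?_, ?_⟩
      · exact Nat.findGreatest_spec (P := fun k => (cfQ e (k+2)).natAbs ≤ u.den) (Nat.zero_le u.den) hP0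
      · set m := Nat.findGreatest (fun k => (cfQ e (k+2)).natAbs ≤ u.den) u.den with hmdef
        by_contra hcon
        push_neg at hcon
        have hk : m + 1 ≤ u.den := by
          have hg := qge e h2 (m+1)
          rw [show m+1+2 = m+3 from rfl, Int.abs_eq_natAbs] at hg
          have h4 : (m:ℤ) + 1 + 1 ≤ ((cfQ e (m+3)).natAbs : ℤ) := by exact_mod_cast hg
          have h3 : ((cfQ e (m+3)).natAbs : ℤ) ≤ (u.den : ℤ) := by exact_mod_cast hcon
          omega
        have hle := Nat.le_findGreatest (P := fun k => (cfQ e (k+2)).natAbs ≤ u.den)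
          hk (show (cfQ e (m+1+2)).natAbs ≤ u.den from hcon)
        rw [← hmdef] at hle
        omega
    -- apply the hypothesis to the n-th convergent
    have hw := H (cfT e 0 n) (keypar n) (by rw [keyden n]; exact hPn)
    rw [key n] at hw
    -- case analysis: u must coincide with ± (p, q)
    by_cases hcase : (u.num = cfP e (n+2) ∧ (u.den : ℤ) = cfQ e (n+2)) ∨
        (u.num = -cfP e (n+2) ∧ (u.den : ℤ) = -cfQ e (n+2))
    · -- u is the n-th convergent
      refine ⟨n, ?_⟩
      rw [cfConv_eq e h2 n]
      congr 1
      have hupos : (0:ℤ) < (u.den : ℤ) := by exact_mod_cast u.pos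
      rcases hcase with ⟨ha, hb⟩ | ⟨ha, hb⟩
      · rcases conv_num_den e h2 n with ⟨h1, h1d⟩ | ⟨h1, h1d⟩
        · refine Rat.ext (by rw [h1, ha]) ?_
          have h5 : ((cfT e 0 n).den : ℤ) = (u.den : ℤ) := by rw [h1d, hb]
          exact_mod_cast h5
        · exfalso
          have hwpos : (0:ℤ) < ((cfT e 0 n).den : ℤ) := by exact_mod_cast (cfT e 0 n).pos
          rw [h1d] at hwpos
          omega
      · rcases conv_num_den e h2 n with ⟨h1, h1d⟩ | ⟨h1, h1d⟩
        · exfalso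
          have hwpos : (0:ℤ) < ((cfT e 0 n).den : ℤ) := by exact_mod_cast (cfT e 0 n).pos
          rw [h1d] at hwpos
          omega
        · refine Rat.ext (by rw [h1, ha]) ?_
          have h5 : ((cfT e 0 n).den : ℤ) = (u.den : ℤ) := by rw [h1d, hb]
          exact_mod_cast h5
    · -- otherwise the core lemma contradicts hw.1
      exfalso
      push_neg at hcase
      have hupos : (0:ℤ) < (u.den : ℤ) := by exact_mod_cast u.pos
      have hultq : (u.den : ℤ) < |cfQ e (n+3)| := by
        rw [Int.abs_eq_natAbs]
        exact_mod_cast hlt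
      have hcore := core e x hx h2 hev hr n u.num (u.den : ℤ) hupos hu hultq
        (fun h => hcase.1 h.1 h.2) (fun h => hcase.2 h.1 h.2)
      push_cast at hcore
      linarith [hw.1, hcore]
end

section
/- A finite ∞-rational u is a convergent of the EICF expansion of an irrational x if and only if there exists a 1-rational v adjacent to u in the Farey graph (i.e., with |ad − bc| = 1 for u = a/b, v = c/d reduced) such that x lies strictly between u and v on the real line. -/
open Filter Topology OnePoint

namespace EicfAux

def shiftSeq (b : ℕ → ℤ) : ℕ → ℤ := fun i => b (i + 1)

lemma isEICF_shift {b : ℕ → ℤ} (hb : IsEICF b) : IsEICF (shiftSeq b) := by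
  refine ⟨fun i => hb.1 (i+1), fun i _ => hb.2 (i+1) (by omega)⟩

lemma shift_head_ne {b : ℕ → ℤ} (hb : IsEICF b) : shiftSeq b 0 ≠ 0 := hb.2 1 le_rfl

lemma cfConv_zero (b : ℕ → ℤ) : cfConv b 0 = Option.some ((b 0 : ℚ)) := by
  simp [cfConv, cfVal, cfInv]

lemma cfConv_succ (b : ℕ → ℤ) (n : ℕ) :
    cfConv b (n + 1) = (cfInv (cfConv (shiftSeq b) n)).map (fun q => (b 0 : ℚ) + q) := by
  have hl : (List.range (n + 2)).map b
      = b 0 :: (List.range (n + 1)).map (shiftSeq b) := by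
    rw [List.range_succ_eq_map]
    simp [List.map_map, shiftSeq, Function.comp]
  show cfVal ((List.range (n + 2)).map b) = _
  rw [hl]
  rfl

lemma repr_pm (c : ℚ) (a b : ℤ) (hb : b ≠ 0) (hcop : Int.gcd a b = 1)
    (hc : c = (a : ℚ) / (b : ℚ)) :
    (a = c.num ∧ b = (c.den : ℤ)) ∨ (a = -c.num ∧ b = -(c.den : ℤ)) := by
  have hden0 : c.den ≠ 0 := c.den_nz
  have hden : (c.den : ℤ) ≠ 0 := Int.ofNat_ne_zero.mpr hden0
  have key : a * (c.den : ℤ) = c.num * b := by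
    have h1 : (a : ℚ) / (b : ℚ) = (c.num : ℚ) / ((c.den : ℤ) : ℚ) := by
      rw [← hc]; push_cast; rw [Rat.num_div_den]
    have hbq : (b : ℚ) ≠ 0 := Int.cast_ne_zero.mpr hb
    have hdq : ((c.den : ℤ) : ℚ) ≠ 0 := Int.cast_ne_zero.mpr hden
    field_simp at h1
    rw [mul_comm c.num b]; exact_mod_cast h1
  have hcop2 : Int.gcd c.num (c.den : ℤ) = 1 := c.reduced
  have d1 : c.num ∣ a := by
    have h : c.num ∣ a * (c.den : ℤ) := key ▸ Dvd.intro b rfl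
    exact Int.dvd_of_dvd_mul_left_of_gcd_one h hcop2
  have d2 : a ∣ c.num := by
    have h : a ∣ c.num * b := key ▸ Dvd.intro (c.den : ℤ) rfl
    exact Int.dvd_of_dvd_mul_left_of_gcd_one h hcop
  by_cases hn : c.num = 0
  · have ha : a = 0 := by simpa [hn] using d1
    have hb1 : b.natAbs = 1 := by simpa [ha, Int.gcd] using hcop
    have hc0 : c = 0 := Rat.zero_iff_num_zero.mpr hn
    have hd1 : c.den = 1 := by rw [hc0]; rfl
    rcases Int.natAbs_eq_iff.mp hb1 with h | h
    · left; constructor <;> omega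
    · right; constructor <;> omega
  · have habs : a = c.num ∨ a = -c.num := by
      have := Nat.dvd_antisymm (Int.natAbs_dvd_natAbs.mpr d2) (Int.natAbs_dvd_natAbs.mpr d1)
      exact Int.natAbs_eq_natAbs_iff.mp this
    rcases habs with h | h
    · left
      refine ⟨h, ?_⟩
      rw [h] at key
      have : (c.den : ℤ) = b := mul_left_cancel₀ hn key
      omega
    · right
      refine ⟨h, ?_⟩
      rw [h] at key
      have h2 : -c.num * (c.den:ℤ) = -c.num * -b := by rw [key]; ring
      have : (c.den : ℤ) = -b := mul_left_cancel₀ (neg_ne_zero.mpr hn) h2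
      omega

/-- parity transport -/
lemma odd_sum_of_rep {c : ℚ} {a b : ℤ} (hb : b ≠ 0) (hcop : Int.gcd a b = 1)
    (hc : c = (a : ℚ) / (b : ℚ)) (h : Odd (a + b)) : Odd (c.num + (c.den : ℤ)) := by
  rcases repr_pm c a b hb hcop hc with ⟨h1, h2⟩ | ⟨h1, h2⟩ <;>
    (rw [Int.odd_iff] at h ⊢; omega)

lemma odd_pair_of_rep {c : ℚ} {a b : ℤ} (hb : b ≠ 0) (hcop : Int.gcd a b = 1)
    (hc : c = (a : ℚ) / (b : ℚ)) (h1 : Odd a) (h2 : Odd b) :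
    Odd c.num ∧ Odd (c.den : ℤ) := by
  rcases repr_pm c a b hb hcop hc with ⟨e1, e2⟩ | ⟨e1, e2⟩ <;>
    (rw [Int.odd_iff] at h1 h2 ⊢; rw [Int.odd_iff]; omega)

lemma den_of_rep {c : ℚ} {a b : ℤ} (hb : b ≠ 0) (hcop : Int.gcd a b = 1)
    (hc : c = (a : ℚ) / (b : ℚ)) : (c.den : ℤ) = |b| := by
  rcases repr_pm c a b hb hcop hc with ⟨_, h2⟩ | ⟨_, h2⟩
  · rw [h2, abs_of_nonneg (by positivity)]
  · rw [h2, abs_neg, abs_of_nonneg (by positivity)]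

lemma adj_of_rep {u v : ℚ} {a b c d : ℤ} (hb : b ≠ 0) (hd : d ≠ 0)
    (hab : Int.gcd a b = 1) (hcd : Int.gcd c d = 1)
    (hu : u = (a : ℚ) / (b : ℚ)) (hv : v = (c : ℚ) / (d : ℚ))
    (h : |a * d - b * c| = 1) :
    |u.num * (v.den : ℤ) - (u.den : ℤ) * v.num| = 1 := by
  have trans : ∀ Y : ℤ, (Y = a * d - b * c ∨ Y = -(a * d - b * c)) → |Y| = 1 := by
    rintro Y (rfl | rfl)
    · exact h
    · rw [abs_neg]; exact h
  apply trans
  rcases repr_pm u a b hb hab hu with ⟨e1, e2⟩ | ⟨e1, e2⟩ <;>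
  rcases repr_pm v c d hd hcd hv with ⟨f1, f2⟩ | ⟨f1, f2⟩
  · left; rw [e1, e2, f1, f2] <;> ring
  · right; rw [e1, e2, f1, f2] <;> ring
  · right; rw [e1, e2, f1, f2] <;> ring
  · left; rw [e1, e2, f1, f2] <;> ring

/-- zero is not strictly between two Farey-adjacent rationals -/
lemma not_adj_of_sign {a b c d : ℤ} (hb : 0 < b) (hd : 0 < d) (ha : a < 0) (hc : 0 < c) :
    |a * d - b * c| ≠ 1 := by
  have h1 : a * d ≤ -1 := by nlinarith
  have h2 : 1 ≤ b * c := by nlinarith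
  intro heq
  rw [abs_eq (by norm_num : (0:ℤ) ≤ 1)] at heq
  omega



lemma inv_eq_den_div_num (c : ℚ) : c⁻¹ = ((c.den : ℤ) : ℚ) / ((c.num : ℤ) : ℚ) := by
  conv_lhs => rw [← Rat.num_div_den c]
  rw [inv_div]
  norm_num

lemma add_inv_rep (m : ℤ) (c : ℚ) (hc : c ≠ 0) :
    (m : ℚ) + c⁻¹ = ((m * c.num + (c.den : ℤ) : ℤ) : ℚ) / ((c.num : ℤ) : ℚ) := by
  have h0 : c.num ≠ 0 := Rat.num_ne_zero.mpr hc
  have h0q : ((c.num : ℤ) : ℚ) ≠ 0 := Int.cast_ne_zero.mpr h0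
  rw [inv_eq_den_div_num]
  push_cast
  field_simp

lemma gcd_add_inv (m : ℤ) (c : ℚ) : Int.gcd (m * c.num + (c.den : ℤ)) c.num = 1 := by
  rw [← Int.isCoprime_iff_gcd_eq_one]
  have h : IsCoprime (c.den : ℤ) c.num := by
    rw [Int.isCoprime_iff_gcd_eq_one, Int.gcd_comm]
    exact c.reduced
  simpa [add_comm] using h.add_mul_right_left m

lemma sub_int_rep (u : ℚ) (m : ℤ) :
    u - (m : ℚ) = ((u.num - m * (u.den : ℤ) : ℤ) : ℚ) / ((u.den : ℤ) : ℚ) := by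
  have hdq : ((u.den : ℤ) : ℚ) ≠ 0 := by
    have h : (u.den : ℤ) ≠ 0 := Int.ofNat_ne_zero.mpr u.den_nz
    exact_mod_cast h
  conv_lhs => rw [← Rat.num_div_den u]
  push_cast
  field_simp

lemma gcd_sub_int (u : ℚ) (m : ℤ) : Int.gcd (u.num - m * (u.den : ℤ)) (u.den : ℤ) = 1 := by
  rw [← Int.isCoprime_iff_gcd_eq_one]
  have h : IsCoprime u.num ((u.den : ℤ)) := by
    rw [Int.isCoprime_iff_gcd_eq_one]; exact u.reduced
  have := h.add_mul_right_left (-m)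
  simpa [sub_eq_add_neg, mul_comm] using this

lemma inv_sub_int_rep (u : ℚ) (m : ℤ) :
    (u - (m : ℚ))⁻¹ = ((u.den : ℤ) : ℚ) / ((u.num - m * (u.den : ℤ) : ℤ) : ℚ) := by
  rw [sub_int_rep u m, inv_div]

lemma conv_spec : ∀ (n : ℕ) (b : ℕ → ℤ), IsEICF b →
    ∃ c : ℚ, cfConv b n = Option.some c ∧ Odd (c.num + (c.den : ℤ)) ∧
      (b 0 ≠ 0 → 1 ≤ |c|) := by
  intro n
  induction n with
  | zero =>
    intro b hb
    refine ⟨(b 0 : ℚ), cfConv_zero b, ?_, ?_⟩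
    · have he : Even (b 0) := hb.1 0
      rw [Rat.num_intCast, Rat.den_intCast]
      rw [Int.even_iff] at he
      rw [Int.odd_iff]
      omega
    · intro h0
      have h2 : (1 : ℤ) ≤ |b 0| := Int.one_le_abs (by omega)
      have h3 : ((1 : ℤ) : ℚ) ≤ ((|b 0| : ℤ) : ℚ) := by exact_mod_cast h2
      rw [Int.cast_abs] at h3
      simpa using h3
  | succ n ih =>
    intro b hb
    obtain ⟨c', hc'1, hc'2, hc'3⟩ := ih (shiftSeq b) (isEICF_shift hb)
    have hbnd : 1 ≤ |c'| := hc'3 (shift_head_ne hb)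
    have hc'0 : c' ≠ 0 := by
      intro h; rw [h] at hbnd; norm_num at hbnd
    have hstep : cfConv b (n + 1) = Option.some ((b 0 : ℚ) + c'⁻¹) := by
      rw [cfConv_succ, hc'1]
      simp [cfInv, hc'0]
    have hrep := add_inv_rep (b 0) c' hc'0
    have hnum0 : c'.num ≠ 0 := Rat.num_ne_zero.mpr hc'0
    refine ⟨(b 0 : ℚ) + c'⁻¹, hstep, ?_, ?_⟩
    · apply odd_sum_of_rep hnum0 (gcd_add_inv (b 0) c') hrep
      have heM : Even (b 0 * c'.num) := (hb.1 0).mul_right _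
      rw [Int.odd_iff] at hc'2 ⊢
      rw [Int.even_iff] at heM
      omega
    · intro h0
      have h2 : (2 : ℚ) ≤ |(b 0 : ℚ)| := by
        have he : Even (b 0) := hb.1 0
        rcases he with ⟨k, hk⟩
        have : (2:ℤ) ≤ |b 0| := by
          rcases abs_cases (b 0) with ⟨h, _⟩ | ⟨h, _⟩ <;> omega
        calc (2:ℚ) = ((2:ℤ):ℚ) := by norm_num
        _ ≤ ((|b 0| : ℤ) : ℚ) := by exact_mod_cast this
        _ = |(b 0 : ℚ)| := Int.cast_abs
      have hinvle : |c'⁻¹| ≤ 1 := by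
        rw [abs_inv]
        exact inv_le_one_of_one_le₀ hbnd
      have habs : |(b 0 : ℚ)| ≤ |(b 0 : ℚ) + c'⁻¹| + |c'⁻¹| := by
        calc |(b 0 : ℚ)| = |((b 0 : ℚ) + c'⁻¹) + (-c'⁻¹)| := by ring_nf
        _ ≤ |(b 0 : ℚ) + c'⁻¹| + |-c'⁻¹| := abs_add_le _ _
        _ = |(b 0 : ℚ) + c'⁻¹| + |c'⁻¹| := by rw [abs_neg]
      linarith

noncomputable def rcv (b : ℕ → ℤ) (n : ℕ) : ℚ := (cfConv b n).getD 0

lemma rcv_some {b : ℕ → ℤ} (hb : IsEICF b) (n : ℕ) : cfConv b n = Option.some (rcv b n) := by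
  obtain ⟨c, hc, -, -⟩ := conv_spec n b hb
  rw [rcv, hc]
  rfl

lemma rcv_odd {b : ℕ → ℤ} (hb : IsEICF b) (n : ℕ) :
    Odd ((rcv b n).num + ((rcv b n).den : ℤ)) := by
  obtain ⟨c, hc, h2, -⟩ := conv_spec n b hb
  have : rcv b n = c := by rw [rcv, hc]; rfl
  rw [this]; exact h2

lemma rcv_bound {b : ℕ → ℤ} (hb : IsEICF b) (h0 : b 0 ≠ 0) (n : ℕ) : 1 ≤ |rcv b n| := by
  obtain ⟨c, hc, -, h3⟩ := conv_spec n b hb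
  have : rcv b n = c := by rw [rcv, hc]; rfl
  rw [this]; exact h3 h0

lemma rcv_shift_ne {b : ℕ → ℤ} (hb : IsEICF b) (n : ℕ) : rcv (shiftSeq b) n ≠ 0 := by
  have h := rcv_bound (isEICF_shift hb) (shift_head_ne hb) n
  intro hc; rw [hc] at h; norm_num at h

lemma rcv_succ {b : ℕ → ℤ} (hb : IsEICF b) (n : ℕ) :
    rcv b (n + 1) = (b 0 : ℚ) + (rcv (shiftSeq b) n)⁻¹ := by
  have h1 := rcv_some hb (n + 1)
  have h2 := rcv_some (isEICF_shift hb) n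
  rw [cfConv_succ, h2] at h1
  simp [cfInv, rcv_shift_ne hb n] at h1
  exact h1.symm

lemma tendsto_iff_op {b : ℕ → ℤ} (hb : IsEICF b) (x : ℝ) :
    Tendsto (fun n => toOP (cfConv b n)) atTop (𝓝 ((x : ℝ) : OnePoint ℝ)) ↔
      Tendsto (fun n => ((rcv b n : ℚ) : ℝ)) atTop (𝓝 x) := by
  have hfun : (fun n => toOP (cfConv b n))
      = (fun y : ℝ => (y : OnePoint ℝ)) ∘ (fun n => ((rcv b n : ℚ) : ℝ)) := by
    funext n
    rw [rcv_some hb n]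
    rfl
  rw [hfun]
  exact (OnePoint.isOpenEmbedding_coe.tendsto_nhds_iff).symm

lemma irrational_inv {y : ℝ} (hy : Irrational y) : Irrational y⁻¹ := by
  intro ⟨q, hq⟩
  have hy0 : y ≠ 0 := fun h => hy ⟨0, by simp [h]⟩
  have hq0 : (q : ℝ) ≠ 0 := by rw [hq]; exact inv_ne_zero hy0
  have : ((q⁻¹ : ℚ) : ℝ) = y := by push_cast; rw [hq, inv_inv]
  exact hy ⟨q⁻¹, this⟩

lemma master {b : ℕ → ℤ} {x : ℝ} (hb : IsEICF b) (hx : Irrational x)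
    (ht : Tendsto (fun n => ((rcv b n : ℚ) : ℝ)) atTop (𝓝 x)) :
    x ≠ ((b 0 : ℤ) : ℝ) ∧ |x - ((b 0 : ℤ) : ℝ)| < 1 ∧
      Irrational ((x - ((b 0 : ℤ) : ℝ))⁻¹) ∧
      Tendsto (fun n => ((rcv (shiftSeq b) n : ℚ) : ℝ)) atTop
        (𝓝 ((x - ((b 0 : ℤ) : ℝ))⁻¹)) := by
  have hne : x ≠ ((b 0 : ℤ) : ℝ) := by
    intro h
    exact hx ⟨(b 0 : ℚ), by rw [h]; push_cast; ring⟩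
  have hsub : x - ((b 0 : ℤ) : ℝ) ≠ 0 := sub_ne_zero.mpr hne
  -- each convergent (n ≥ 1) is within 1 of b 0
  have hbnd : ∀ n : ℕ, |((rcv b (n + 1) : ℚ) : ℝ) - ((b 0 : ℤ) : ℝ)| ≤ 1 := by
    intro n
    have h1 := rcv_succ hb n
    have h2 : 1 ≤ |rcv (shiftSeq b) n| := rcv_bound (isEICF_shift hb) (shift_head_ne hb) n
    have h3 : |(rcv (shiftSeq b) n)⁻¹| ≤ 1 := by
      rw [abs_inv]; exact inv_le_one_of_one_le₀ h2
    have h4 : (rcv b (n + 1) : ℚ) - (b 0 : ℚ) = (rcv (shiftSeq b) n)⁻¹ := by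
      rw [h1]; ring
    have h5 : |(rcv b (n + 1) : ℚ) - (b 0 : ℚ)| ≤ 1 := by rw [h4]; exact h3
    have := (Rat.cast_le (K := ℝ)).mpr h5
    rw [Rat.cast_abs] at this
    push_cast at this ⊢
    convert this using 2
  have hshiftlim : Tendsto (fun n => ((rcv b (n + 1) : ℚ) : ℝ)) atTop (𝓝 x) :=
    ht.comp (tendsto_add_atTop_nat 1)
  have habs : Tendsto (fun n => |((rcv b (n + 1) : ℚ) : ℝ) - ((b 0 : ℤ) : ℝ)|) atTop
      (𝓝 |x - ((b 0 : ℤ) : ℝ)|) := ((hshiftlim.sub_const _).abs)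
  have hle : |x - ((b 0 : ℤ) : ℝ)| ≤ 1 :=
    le_of_tendsto habs (Filter.Eventually.of_forall hbnd)
  have hlt : |x - ((b 0 : ℤ) : ℝ)| < 1 := by
    rcases lt_or_eq_of_le hle with h | h
    · exact h
    · exfalso
      rcases abs_eq (by norm_num : (0:ℝ) ≤ 1) |>.mp h with h2 | h2
      · exact hx ⟨(b 0 : ℚ) + 1, by push_cast; linarith⟩
      · exact hx ⟨(b 0 : ℚ) - 1, by push_cast; linarith⟩
  have hirr : Irrational (x - ((b 0 : ℤ) : ℝ)) := by
    have := hx.sub_intCast (b 0)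
    simpa using this
  have hinv_irr : Irrational ((x - ((b 0 : ℤ) : ℝ))⁻¹) := irrational_inv hirr
  have hshift : Tendsto (fun n => ((rcv (shiftSeq b) n : ℚ) : ℝ)) atTop
      (𝓝 ((x - ((b 0 : ℤ) : ℝ))⁻¹)) := by
    have heq : ∀ n, ((rcv (shiftSeq b) n : ℚ) : ℝ)
        = (((rcv b (n + 1) : ℚ) : ℝ) - ((b 0 : ℤ) : ℝ))⁻¹ := by
      intro n
      have h1 := rcv_succ hb n
      have h2 : (rcv b (n + 1) : ℚ) - (b 0 : ℚ) = (rcv (shiftSeq b) n)⁻¹ := by rw [h1]; ring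
      have h3 : ((rcv (shiftSeq b) n)⁻¹)⁻¹ = rcv (shiftSeq b) n := inv_inv _
      rw [← h3, ← h2]
      push_cast
      ring_nf
    rw [funext heq]
    exact ((hshiftlim.sub_const _).inv₀ hsub)
  exact ⟨hne, hlt, hinv_irr, hshift⟩

def Btw (a x c : ℝ) : Prop := (a < x ∧ x < c) ∨ (c < x ∧ x < a)

lemma btw_symm {a x c : ℝ} (h : Btw a x c) : Btw c x a := h.symm

lemma btw_sub {a x c : ℝ} (m : ℝ) (h : Btw a x c) : Btw (a - m) (x - m) (c - m) := by
  rcases h with ⟨h1, h2⟩ | ⟨h1, h2⟩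
  · left; constructor <;> linarith
  · right; constructor <;> linarith

lemma btw_add {a x c : ℝ} (m : ℝ) (h : Btw a x c) : Btw (m + a) (m + x) (m + c) := by
  rcases h with ⟨h1, h2⟩ | ⟨h1, h2⟩
  · left; constructor <;> linarith
  · right; constructor <;> linarith

lemma inv_lt_inv_same {a b : ℝ} (h : a < b) (hs : 0 < a ∨ b < 0) : b⁻¹ < a⁻¹ := by
  rcases hs with hs | hs
  · exact inv_strictAnti₀ hs h
  · have h1 : 0 < -b := by linarith
    have h2 : -b < -a := by linarith
    have := inv_strictAnti₀ h1 h2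
    rw [inv_neg, inv_neg] at this
    linarith

lemma btw_inv {a x c : ℝ} (h : Btw a x c) (hs : (0 < a ∧ 0 < c) ∨ (a < 0 ∧ c < 0)) :
    Btw a⁻¹ x⁻¹ c⁻¹ := by
  rcases h with ⟨h1, h2⟩ | ⟨h1, h2⟩
  · right
    rcases hs with ⟨s1, s2⟩ | ⟨s1, s2⟩
    · exact ⟨inv_lt_inv_same h2 (Or.inl (by linarith)), inv_lt_inv_same h1 (Or.inl s1)⟩
    · exact ⟨inv_lt_inv_same h2 (Or.inr s2), inv_lt_inv_same h1 (Or.inr (by linarith))⟩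
  · left
    rcases hs with ⟨s1, s2⟩ | ⟨s1, s2⟩
    · exact ⟨inv_lt_inv_same h2 (Or.inl (by linarith)), inv_lt_inv_same h1 (Or.inl s2)⟩
    · exact ⟨inv_lt_inv_same h2 (Or.inr s1), inv_lt_inv_same h1 (Or.inr (by linarith))⟩

lemma num_ne_zero_of_odd {q : ℚ} (h : Odd q.num) : q ≠ 0 := by
  intro h0
  rw [h0] at h
  norm_num at h

lemma fwd : ∀ (n : ℕ) (b : ℕ → ℤ) (x : ℝ) (u : ℚ), IsEICF b → Irrational x →
    Tendsto (fun k => ((rcv b k : ℚ) : ℝ)) atTop (𝓝 x) →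
    cfConv b n = Option.some u →
    ∃ v : ℚ, Odd v.num ∧ Odd ((v.den : ℤ)) ∧
      |u.num * (v.den : ℤ) - (u.den : ℤ) * v.num| = 1 ∧ Btw (u : ℝ) x (v : ℝ) := by
  intro n
  induction n with
  | zero =>
    intro b x u hb hx ht hconv
    rw [cfConv_zero] at hconv
    have hu : u = ((b 0 : ℤ) : ℚ) := (Option.some_injective ℚ hconv).symm
    obtain ⟨hne, hlt, -, -⟩ := master hb hx ht
    have heven : Even (b 0) := hb.1 0
    by_cases hside : ((b 0 : ℤ) : ℝ) < x
    · refine ⟨((b 0 + 1 : ℤ) : ℚ), ?_, ?_, ?_, ?_⟩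
      · rw [Rat.num_intCast]
        rw [Int.even_iff] at heven; rw [Int.odd_iff]; omega
      · rw [Rat.den_intCast]; norm_num
      · rw [hu, Rat.num_intCast, Rat.den_intCast, Rat.num_intCast, Rat.den_intCast]
        simp
      · left
        constructor
        · rw [hu]; push_cast; push_cast at hside; exact hside
        · rcases abs_lt.mp hlt with ⟨-, h2⟩
          push_cast; linarith
    · push_neg at hside
      have hside' : x < ((b 0 : ℤ) : ℝ) := lt_of_le_of_ne hside hne
      refine ⟨((b 0 - 1 : ℤ) : ℚ), ?_, ?_, ?_, ?_⟩
      · rw [Rat.num_intCast]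
        rw [Int.even_iff] at heven; rw [Int.odd_iff]; omega
      · rw [Rat.den_intCast]; norm_num
      · rw [hu, Rat.num_intCast, Rat.den_intCast, Rat.num_intCast, Rat.den_intCast]
        simp
      · right
        constructor
        · rcases abs_lt.mp hlt with ⟨h1, -⟩
          push_cast; linarith
        · rw [hu]; push_cast; push_cast at hside'; exact hside'
  | succ n ih =>
    intro b x u hb hx ht hconv
    -- u = b 0 + c'⁻¹ with c' the n-th convergent of the shifted sequence
    have hc'some := rcv_some (isEICF_shift hb) n
    set c' : ℚ := rcv (shiftSeq b) n with hc'def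
    have hc'0 : c' ≠ 0 := rcv_shift_ne hb n
    have husome := rcv_some hb (n + 1)
    rw [hconv] at husome
    have hu : u = (b 0 : ℚ) + c'⁻¹ := by
      have h1 := Option.some_injective ℚ husome
      rw [hc'def]
      exact h1.trans (rcv_succ hb n)
    obtain ⟨hne, hlt, hirr, hshift⟩ := master hb hx ht
    set t : ℝ := (x - ((b 0 : ℤ) : ℝ))⁻¹ with htdef
    obtain ⟨v'', hv1, hv2, hv3, hv4⟩ :=
      ih (shiftSeq b) t c' (isEICF_shift hb) hirr hshift hc'some
    -- signs of c' and v''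
    have hv''0 : v'' ≠ 0 := num_ne_zero_of_odd hv1
    have hsame : (0 < (c' : ℝ) ∧ 0 < (v'' : ℝ)) ∨ ((c' : ℝ) < 0 ∧ (v'' : ℝ) < 0) := by
      rcases lt_trichotomy (c' : ℝ) 0 with h1 | h1 | h1
      · rcases lt_trichotomy (v'' : ℝ) 0 with h2 | h2 | h2
        · exact Or.inr ⟨h1, h2⟩
        · exact absurd ((Rat.cast_eq_zero (α := ℝ)).mp h2) hv''0
        · exfalso
          have hcn : c'.num < 0 := Rat.num_neg.mpr (by exact_mod_cast h1)
          have hvn : 0 < v''.num := Rat.num_pos.mpr (by exact_mod_cast h2)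
          exact not_adj_of_sign (Int.natCast_pos.mpr c'.pos) (Int.natCast_pos.mpr v''.pos)
            hcn hvn hv3
      · exact absurd ((Rat.cast_eq_zero (α := ℝ)).mp h1) hc'0
      · rcases lt_trichotomy (v'' : ℝ) 0 with h2 | h2 | h2
        · exfalso
          have hcn : 0 < c'.num := Rat.num_pos.mpr (by exact_mod_cast h1)
          have hvn : v''.num < 0 := Rat.num_neg.mpr (by exact_mod_cast h2)
          exact not_adj_of_sign (Int.natCast_pos.mpr v''.pos) (Int.natCast_pos.mpr c'.pos)
            hvn hcn (by
              rw [show v''.num * (c'.den : ℤ) - (v''.den : ℤ) * c'.num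
                = -(c'.num * (v''.den : ℤ) - (c'.den : ℤ) * v''.num) from by ring, abs_neg]
              exact hv3)
        · exact absurd ((Rat.cast_eq_zero (α := ℝ)).mp h2) hv''0
        · exact Or.inl ⟨h1, h2⟩
    refine ⟨(b 0 : ℚ) + v''⁻¹, ?_, ?_, ?_, ?_⟩
    · exact (odd_pair_of_rep (Rat.num_ne_zero.mpr hv''0) (gcd_add_inv (b 0) v'')
        (add_inv_rep (b 0) v'' hv''0) (by
          have heM : Even (b 0 * v''.num) := (hb.1 0).mul_right _
          rw [Int.even_iff] at heM; rw [Int.odd_iff] at hv2 ⊢; omega) hv1).1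
    · exact (odd_pair_of_rep (Rat.num_ne_zero.mpr hv''0) (gcd_add_inv (b 0) v'')
        (add_inv_rep (b 0) v'' hv''0) (by
          have heM : Even (b 0 * v''.num) := (hb.1 0).mul_right _
          rw [Int.even_iff] at heM; rw [Int.odd_iff] at hv2 ⊢; omega) hv1).2
    · -- adjacency
      rw [hu]
      apply adj_of_rep (Rat.num_ne_zero.mpr hc'0) (Rat.num_ne_zero.mpr hv''0)
        (gcd_add_inv (b 0) c') (gcd_add_inv (b 0) v'')
        (add_inv_rep (b 0) c' hc'0) (add_inv_rep (b 0) v'' hv''0)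
      have : (b 0 * c'.num + (c'.den : ℤ)) * v''.num - c'.num * (b 0 * v''.num + (v''.den : ℤ))
          = -(c'.num * (v''.den : ℤ) - (c'.den : ℤ) * v''.num) := by ring
      rw [this, abs_neg]
      exact hv3
    · -- betweenness
      have hbtw1 : Btw ((c' : ℝ))⁻¹ t⁻¹ ((v'' : ℝ))⁻¹ := btw_inv hv4 hsame
      have hbtw2 := btw_add (((b 0 : ℤ) : ℝ)) hbtw1
      have hxeq : ((b 0 : ℤ) : ℝ) + t⁻¹ = x := by
        rw [htdef, inv_inv]; ring
      rw [hxeq] at hbtw2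
      have hueq : ((u : ℚ) : ℝ) = ((b 0 : ℤ) : ℝ) + ((c' : ℝ))⁻¹ := by
        rw [hu]; push_cast; ring
      have hveq : (((b 0 : ℚ) + v''⁻¹ : ℚ) : ℝ) = ((b 0 : ℤ) : ℝ) + ((v'' : ℝ))⁻¹ := by
        push_cast; ring
      rw [hueq, hveq]
      exact hbtw2

lemma sub_int_num_den (u : ℚ) (m : ℤ) :
    (u - (m : ℚ)).num = u.num - m * (u.den : ℤ) ∧
      ((u - (m : ℚ)).den : ℤ) = (u.den : ℤ) := by
  have hden : (u.den : ℤ) ≠ 0 := Int.ofNat_ne_zero.mpr u.den_nz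
  rcases repr_pm (u - (m : ℚ)) (u.num - m * (u.den : ℤ)) (u.den : ℤ) hden
      (gcd_sub_int u m) (sub_int_rep u m) with ⟨h1, h2⟩ | ⟨h1, h2⟩
  · exact ⟨h1.symm, h2.symm⟩
  · exfalso
    have hpos : (0 : ℤ) < (u.den : ℤ) := Int.natCast_pos.mpr u.pos
    have hpos2 : (0 : ℤ) < ((u - (m : ℚ)).den : ℤ) := Int.natCast_pos.mpr (u - (m : ℚ)).pos
    omega

lemma bwd : ∀ (N : ℕ) (b : ℕ → ℤ) (x : ℝ) (u v : ℚ), u.den ≤ N → IsEICF b →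
    Irrational x → Tendsto (fun k => ((rcv b k : ℚ) : ℝ)) atTop (𝓝 x) →
    Odd (u.num + (u.den : ℤ)) → Odd v.num → Odd ((v.den : ℤ)) →
    |u.num * (v.den : ℤ) - (u.den : ℤ) * v.num| = 1 → Btw (u : ℝ) x (v : ℝ) →
    ∃ n : ℕ, cfConv b n = Option.some u := by
  intro N
  induction N with
  | zero =>
    intro b x u v hden
    exact absurd hden (by have := u.pos; omega)
  | succ N ih =>
    intro b x u v hdenN hb hx ht huodd hv1 hv2 hadj hbtw
    by_cases hu0 : u = ((b 0 : ℤ) : ℚ)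
    · exact ⟨0, by rw [cfConv_zero, hu0]⟩
    obtain ⟨hne, hlt, hirr, hshift⟩ := master hb hx ht
    set m : ℤ := b 0 with hm
    have heven : Even m := hb.1 0
    have hdu : (0 : ℤ) < (u.den : ℤ) := Int.natCast_pos.mpr u.pos
    have hdv : (0 : ℤ) < (v.den : ℤ) := Int.natCast_pos.mpr v.pos
    -- v ≠ m
    have hv0 : v ≠ ((m : ℤ) : ℚ) := by
      intro h
      rw [h, Rat.num_intCast] at hv1
      rw [Int.even_iff] at heven
      rw [Int.odd_iff] at hv1
      omega
    -- numerators of u - m and v - m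
    obtain ⟨hun, hud⟩ := sub_int_num_den u m
    obtain ⟨hvn, hvd⟩ := sub_int_num_den v m
    have husub0 : u - ((m : ℤ) : ℚ) ≠ 0 := sub_ne_zero.mpr hu0
    have hvsub0 : v - ((m : ℤ) : ℚ) ≠ 0 := sub_ne_zero.mpr hv0
    have hnu0 : u.num - m * (u.den : ℤ) ≠ 0 := by
      rw [← hun]; exact Rat.num_ne_zero.mpr husub0
    have hnv0 : v.num - m * (v.den : ℤ) ≠ 0 := by
      rw [← hvn]; exact Rat.num_ne_zero.mpr hvsub0
    set nu : ℤ := u.num - m * (u.den : ℤ) with hnudef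
    set nv : ℤ := v.num - m * (v.den : ℤ) with hnvdef
    -- u - m and v - m have the same sign
    have hsame : (0 < u - ((m : ℤ) : ℚ) ∧ 0 < v - ((m : ℤ) : ℚ)) ∨
        (u - ((m : ℤ) : ℚ) < 0 ∧ v - ((m : ℤ) : ℚ) < 0) := by
      rcases lt_trichotomy (u - ((m : ℤ) : ℚ)) 0 with h1 | h1 | h1
      · rcases lt_trichotomy (v - ((m : ℤ) : ℚ)) 0 with h2 | h2 | h2
        · exact Or.inr ⟨h1, h2⟩
        · exact absurd h2 hvsub0
        · exfalso
          have ha : nu < 0 := by rw [← hun]; exact Rat.num_neg.mpr h1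
          have hc : 0 < nv := by rw [← hvn]; exact Rat.num_pos.mpr h2
          refine not_adj_of_sign hdu hdv ha hc ?_
          rw [show nu * (v.den : ℤ) - (u.den : ℤ) * nv
            = u.num * (v.den : ℤ) - (u.den : ℤ) * v.num from by rw [hnudef, hnvdef]; ring]
          exact hadj
      · exact absurd h1 husub0
      · rcases lt_trichotomy (v - ((m : ℤ) : ℚ)) 0 with h2 | h2 | h2
        · exfalso
          have ha : nv < 0 := by rw [← hvn]; exact Rat.num_neg.mpr h2
          have hc : 0 < nu := by rw [← hun]; exact Rat.num_pos.mpr h1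
          refine not_adj_of_sign hdv hdu ha hc ?_
          rw [show nv * (u.den : ℤ) - (v.den : ℤ) * nu
            = -(u.num * (v.den : ℤ) - (u.den : ℤ) * v.num) from by rw [hnudef, hnvdef]; ring,
            abs_neg]
          exact hadj
        · exact absurd h2 hvsub0
        · exact Or.inl ⟨h1, h2⟩
    -- real versions
    have hsameR : (0 < (u : ℝ) - ((m : ℤ) : ℝ) ∧ 0 < (v : ℝ) - ((m : ℤ) : ℝ)) ∨
        ((u : ℝ) - ((m : ℤ) : ℝ) < 0 ∧ (v : ℝ) - ((m : ℤ) : ℝ) < 0) := by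
      rcases hsame with ⟨h1, h2⟩ | ⟨h1, h2⟩
      · left
        constructor
        · have := (Rat.cast_pos (K := ℝ)).mpr h1; push_cast at this; linarith
        · have := (Rat.cast_pos (K := ℝ)).mpr h2; push_cast at this; linarith
      · right
        constructor
        · have := (Rat.cast_lt_zero (K := ℝ)).mpr h1; push_cast at this; linarith
        · have := (Rat.cast_lt_zero (K := ℝ)).mpr h2; push_cast at this; linarith
    have hbtwinv : Btw ((u : ℝ) - ((m : ℤ) : ℝ))⁻¹ (x - ((m : ℤ) : ℝ))⁻¹
        ((v : ℝ) - ((m : ℤ) : ℝ))⁻¹ :=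
      btw_inv (btw_sub _ hbtw) hsameR
    -- the new rationals
    set u' : ℚ := (u - ((m : ℤ) : ℚ))⁻¹ with hu'def
    set v' : ℚ := (v - ((m : ℤ) : ℚ))⁻¹ with hv'def
    have hu'ne : u' ≠ 0 := inv_ne_zero husub0
    have hrepu : u' = ((u.den : ℤ) : ℚ) / ((nu : ℤ) : ℚ) := inv_sub_int_rep u m
    have hrepv : v' = ((v.den : ℤ) : ℚ) / ((nv : ℤ) : ℚ) := inv_sub_int_rep v m
    have hgcdu : Int.gcd (u.den : ℤ) nu = 1 := by
      rw [Int.gcd_comm]; exact gcd_sub_int u m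
    have hgcdv : Int.gcd (v.den : ℤ) nv = 1 := by
      rw [Int.gcd_comm]; exact gcd_sub_int v m
    have hEmdu : Even (m * (u.den : ℤ)) := heven.mul_right _
    have hEmdv : Even (m * (v.den : ℤ)) := heven.mul_right _
    have hu'odd : Odd (u'.num + (u'.den : ℤ)) := by
      apply odd_sum_of_rep hnu0 hgcdu hrepu
      rw [Int.odd_iff] at huodd ⊢
      rw [Int.even_iff] at hEmdu
      omega
    have hv'pair : Odd v'.num ∧ Odd ((v'.den : ℤ)) := by
      apply odd_pair_of_rep hnv0 hgcdv hrepv hv2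
      rw [Int.odd_iff] at hv1 ⊢
      rw [Int.even_iff] at hEmdv
      omega
    have hadj' : |u'.num * ((v'.den : ℤ)) - ((u'.den : ℤ)) * v'.num| = 1 := by
      apply adj_of_rep hnu0 hnv0 hgcdu hgcdv hrepu hrepv
      rw [show (u.den : ℤ) * nv - nu * (v.den : ℤ)
        = -(u.num * (v.den : ℤ) - (u.den : ℤ) * v.num) from by rw [hnudef, hnvdef]; ring,
        abs_neg]
      exact hadj
    -- measure decreases
    have hsubuv : (u : ℝ) - (v : ℝ) =
        ((u.num * (v.den : ℤ) - (u.den : ℤ) * v.num : ℤ) : ℝ)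
          / (((u.den : ℤ) * (v.den : ℤ) : ℤ) : ℝ) := by
      rw [Rat.cast_def, Rat.cast_def]
      push_cast
      have h1 : ((u.den : ℝ)) ≠ 0 := Nat.cast_ne_zero.mpr u.den_nz
      have h2 : ((v.den : ℝ)) ≠ 0 := Nat.cast_ne_zero.mpr v.den_nz
      field_simp
    have habsuv : |(u : ℝ) - (v : ℝ)| = 1 / (((u.den : ℕ) : ℝ) * ((v.den : ℕ) : ℝ)) := by
      have hp1 : (0:ℝ) < ((u.den : ℕ) : ℝ) := Nat.cast_pos.mpr u.pos
      have hp2 : (0:ℝ) < ((v.den : ℕ) : ℝ) := Nat.cast_pos.mpr v.pos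
      rw [hsubuv, abs_div]
      have h1 : |((u.num * (v.den : ℤ) - (u.den : ℤ) * v.num : ℤ) : ℝ)| = 1 := by
        rw [← Int.cast_abs, hadj]; norm_num
      have h2 : ((((u.den : ℤ) * (v.den : ℤ) : ℤ)) : ℝ)
          = ((u.den : ℕ) : ℝ) * ((v.den : ℕ) : ℝ) := by push_cast; ring
      rw [h1, h2, abs_of_pos (by positivity)]
    have hxu : |x - (u : ℝ)| < |(u : ℝ) - (v : ℝ)| := by
      rcases hbtw with ⟨h1, h2⟩ | ⟨h1, h2⟩
      · rw [abs_of_pos (by linarith), abs_of_neg (by linarith)]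
        linarith
      · rw [abs_of_neg (by linarith), abs_of_pos (by linarith)]
        linarith
    have hnuabs : (|nu| : ℝ) = ((u.den : ℕ) : ℝ) * |(u : ℝ) - ((m : ℤ) : ℝ)| := by
      have hcast : (u : ℝ) - ((m : ℤ) : ℝ) = ((nu : ℤ) : ℝ) / ((u.den : ℕ) : ℝ) := by
        have h0 : ((u - ((m : ℤ) : ℚ) : ℚ) : ℝ) = (u : ℝ) - ((m : ℤ) : ℝ) := by push_cast; ring
        have hud2 : (u - ((m : ℤ) : ℚ)).den = u.den := by exact_mod_cast hud
        rw [← h0, Rat.cast_def, hun, hud2]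
      rw [hcast, abs_div]
      have h1 : (0:ℝ) < ((u.den : ℕ) : ℝ) := Nat.cast_pos.mpr u.pos
      rw [abs_of_pos h1, ← Int.cast_abs]
      field_simp
    have hmeasR : (|nu| : ℝ) < ((u.den : ℕ) : ℝ) + 1 := by
      have h1 : (0:ℝ) < ((u.den : ℕ) : ℝ) := Nat.cast_pos.mpr u.pos
      have h2 : (1:ℝ) ≤ ((v.den : ℕ) : ℝ) := by exact_mod_cast v.pos
      have htri : |(u : ℝ) - ((m : ℤ) : ℝ)| ≤ |x - (u : ℝ)| + |x - ((m : ℤ) : ℝ)| := by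
        calc |(u : ℝ) - ((m : ℤ) : ℝ)| = |(-(x - (u:ℝ))) + (x - ((m : ℤ) : ℝ))| := by ring_nf
        _ ≤ |(-(x - (u:ℝ)))| + |x - ((m : ℤ) : ℝ)| := abs_add_le _ _
        _ = |x - (u : ℝ)| + |x - ((m : ℤ) : ℝ)| := by rw [abs_neg]
      have hd : |(u : ℝ) - ((m : ℤ) : ℝ)| < 1 / (((u.den : ℕ) : ℝ) * ((v.den : ℕ) : ℝ)) + 1 := by
        rw [← habsuv]
        calc |(u : ℝ) - ((m : ℤ) : ℝ)| ≤ |x - (u : ℝ)| + |x - ((m : ℤ) : ℝ)| := htri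
        _ < |(u : ℝ) - (v : ℝ)| + 1 := by
            exact add_lt_add hxu hlt
      rw [hnuabs]
      have hmul := mul_lt_mul_of_pos_left hd h1
      calc ((u.den : ℕ) : ℝ) * |(u : ℝ) - ((m : ℤ) : ℝ)|
          < ((u.den : ℕ) : ℝ) * (1 / (((u.den : ℕ) : ℝ) * ((v.den : ℕ) : ℝ)) + 1) := hmul
      _ = 1 / ((v.den : ℕ) : ℝ) + ((u.den : ℕ) : ℝ) := by field_simp
      _ ≤ 1 + ((u.den : ℕ) : ℝ) := by
          have : 1 / ((v.den : ℕ) : ℝ) ≤ 1 := by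
            rw [div_le_one (by linarith)]; exact h2
          linarith
      _ = ((u.den : ℕ) : ℝ) + 1 := by ring
    have hmeasZ : |nu| ≤ (u.den : ℤ) := by
      have : (|nu| : ℝ) < ((u.den : ℤ) : ℝ) + 1 := by push_cast; push_cast at hmeasR; linarith
      have h2 : |nu| < (u.den : ℤ) + 1 := by exact_mod_cast this
      omega
    have hmeas : |nu| < (u.den : ℤ) := by
      rcases lt_or_eq_of_le hmeasZ with h | h
      · exact h
      · exfalso
        -- then u.den ∣ u.num, so u.den = 1, parity contradiction
        have habs2 : nu = (u.den : ℤ) ∨ nu = -(u.den : ℤ) :=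
          (abs_eq (by omega : (0:ℤ) ≤ (u.den : ℤ))).mp h
        have hdvd : (u.den : ℤ) ∣ u.num := by
          rcases habs2 with h2 | h2
          · exact ⟨m + 1, by rw [hnudef] at h2; linear_combination h2⟩
          · exact ⟨m - 1, by rw [hnudef] at h2; linear_combination h2⟩
        have hdvd2 : u.den ∣ u.num.natAbs := by
          have := Int.natAbs_dvd_natAbs.mpr hdvd
          simpa using this
        have hcop : Nat.gcd u.num.natAbs u.den = 1 := u.reduced
        have : u.den ∣ 1 := hcop ▸ Nat.dvd_gcd hdvd2 dvd_rfl
        have hden1 : u.den = 1 := Nat.dvd_one.mp this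
        have hden1Z : (u.den : ℤ) = 1 := by exact_mod_cast hden1
        have hnueq : nu = u.num - m := by rw [hnudef, hden1Z]; ring
        rw [Int.odd_iff] at huodd
        rw [Int.even_iff] at heven
        rcases habs2 with h2 | h2 <;> omega
    -- now recurse
    have hden' : u'.den ≤ N := by
      have hd1 : (u'.den : ℤ) = |nu| := den_of_rep hnu0 hgcdu hrepu
      have : (u'.den : ℤ) ≤ (N : ℤ) := by
        rw [hd1]
        have : (u.den : ℤ) ≤ (N : ℤ) + 1 := by exact_mod_cast hdenN
        omega
      exact_mod_cast this
    have hbtw' : Btw ((u' : ℚ) : ℝ) ((x - ((m : ℤ) : ℝ))⁻¹) ((v' : ℚ) : ℝ) := by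
      have hcu : ((u' : ℚ) : ℝ) = ((u : ℝ) - ((m : ℤ) : ℝ))⁻¹ := by
        rw [hu'def]; push_cast; ring
      have hcv : ((v' : ℚ) : ℝ) = ((v : ℝ) - ((m : ℤ) : ℝ))⁻¹ := by
        rw [hv'def]; push_cast; ring
      rw [hcu, hcv]
      exact hbtwinv
    obtain ⟨n, hn⟩ := ih (shiftSeq b) ((x - ((m : ℤ) : ℝ))⁻¹) u' v' hden'
      (isEICF_shift hb) hirr hshift hu'odd hv'pair.1 hv'pair.2 hadj' hbtw'
    refine ⟨n + 1, ?_⟩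
    rw [cfConv_succ, hn]
    have hcf : cfInv (Option.some u') = Option.some u'⁻¹ := by
      simp [cfInv, hu'ne]
    rw [hcf, Option.map_some, ← hm]
    have heq : ((m : ℤ) : ℚ) + u'⁻¹ = u := by
      rw [hu'def, inv_inv]
      ring
    rw [heq]

end EicfAux

/-- An ∞-rational u is a convergent of the EICF expansion of an irrational x if and
only if there is a 1-rational v adjacent to u in the Farey graph such that x lies
strictly between u and v on the real line. -/
theorem eicf_convergent_iff_one_rational_neighbour (x : ℝ) (hx : Irrational x)
    (e : ℕ → ℤ) (he : IsEICFExpansion e ((x : ℝ) : OnePoint ℝ))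
    (u : ℚ) (hu : Odd (u.num + (u.den : ℤ))) :
    (∃ n : ℕ, cfConv e n = Option.some u) ↔
      ∃ v : ℚ, Odd v.num ∧ Odd (v.den : ℤ) ∧
        |u.num * (v.den : ℤ) - (u.den : ℤ) * v.num| = 1 ∧
        (((u : ℝ) < x ∧ x < (v : ℝ)) ∨ ((v : ℝ) < x ∧ x < (u : ℝ))) := by
  obtain ⟨hb, ht0⟩ := he
  have ht := (EicfAux.tendsto_iff_op hb x).mp ht0
  constructor
  · rintro ⟨n, hn⟩
    obtain ⟨v, h1, h2, h3, h4⟩ := EicfAux.fwd n e x u hb hx ht hn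
    exact ⟨v, h1, h2, h3, h4⟩
  · rintro ⟨v, h1, h2, h3, h4⟩
    exact EicfAux.bwd u.den e x u v le_rfl hb hx ht hu h1 h2 h3 h4
end
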